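/- Let B ∈ ℝ^{3N×K} be a matrix (shape basis) and for each i let P_i = R_i · mat(B c_i) ∈ ℝ^{3×N} where R_i ∈ SO(3), c_i ∈ ℝᴷ, and mat reshapes a 3N-vector into a 3×N matrix column-major. Then the matrix W ∈ ℝ^{3F×N} obtained by stacking P_1, …, P_F vertically has rank at most 3K. -/

import Mathlib

/-- Reshape a `3N`-vector into a `3 × N` matrix (column-major). -/
def matReshape (N : ℕ) (v : Fin (3 * N) → ℝ) : Matrix (Fin 3) (Fin N) ℝ :=
  fun a j => v ⟨3 * j.val + a.val, by have := a.isLt; have := j.isLt; omega⟩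

/-!
Each reshaped shape `mat (B c_i)` is the combination `∑ₖ c_i k • mat(Bₖ)` of the reshaped basis
columns, so the `i`-th block of `W` is `∑_{b,k} R_i(·,b) c_i k • mat(Bₖ)(b,·)`. Hence `W` factors
as (motion coefficients) × (the `3K × N` matrix stacking the rows of the `mat(Bₖ)`), and its rank
is bounded by the inner dimension `3K`.
-/

open Matrix

def shapeBasisStack {N : ℕ} {ι : Type*} (B : Matrix (Fin (3 * N)) ι ℝ) :
    Matrix (Fin 3 × ι) (Fin N) ℝ :=
  fun q => matReshape N (fun r => B r q.2) q.1

def motionCoeffs {F ι : Type*} (R : F → Matrix (Fin 3) (Fin 3) ℝ) (c : F → ι → ℝ) :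
    Matrix (F × Fin 3) (Fin 3 × ι) ℝ :=
  fun p q => R p.1 p.2 q.1 * c p.1 q.2

theorem matReshape_mulVec {N : ℕ} {ι : Type*} [Fintype ι] (B : Matrix (Fin (3 * N)) ι ℝ)
    (x : ι → ℝ) : matReshape N (B *ᵥ x) = ∑ k, x k • matReshape N (fun r => B r k) := by
  ext a j
  simp only [matReshape, mulVec, dotProduct, Matrix.sum_apply, Matrix.smul_apply, smul_eq_mul,
    mul_comm]

theorem mul_matReshape_mulVec_apply {F ι : Type*} [Fintype ι] {N : ℕ}
    (B : Matrix (Fin (3 * N)) ι ℝ) (R : F → Matrix (Fin 3) (Fin 3) ℝ) (c : F → ι → ℝ)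
    (i : F) (a : Fin 3) (j : Fin N) :
    (R i * matReshape N (B *ᵥ c i)) a j = (motionCoeffs R c * shapeBasisStack B) (i, a) j := by
  simp only [matReshape_mulVec, Matrix.sum_apply, Matrix.smul_apply, mul_apply,
    Fintype.sum_prod_type, motionCoeffs, shapeBasisStack, smul_eq_mul, Finset.mul_sum, mul_assoc]

theorem low_rank_shape_basis_general (F N K : ℕ)
    (B : Matrix (Fin (3 * N)) (Fin K) ℝ)
    (R : Fin F → Matrix (Fin 3) (Fin 3) ℝ)
    (c : Fin F → (Fin K → ℝ))
    (W : Matrix (Fin F × Fin 3) (Fin N) ℝ)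
    (hW : ∀ i a j, W (i, a) j = (R i * matReshape N (B.mulVec (c i))) a j) :
    W.rank ≤ 3 * K := by
  have hfactor : W = motionCoeffs R c * shapeBasisStack B := by
    ext ⟨i, a⟩ j
    rw [hW, mul_matReshape_mulVec_apply]
  calc W.rank ≤ (shapeBasisStack B).rank := hfactor ▸ rank_mul_le_right _ _
    _ ≤ Fintype.card (Fin 3 × Fin K) := rank_le_card_height _
    _ = 3 * K := by simp

theorem low_rank_shape_basis (F N K : ℕ)
    (B : Matrix (Fin (3 * N)) (Fin K) ℝ)
    (R : Fin F → Matrix (Fin 3) (Fin 3) ℝ)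
    (hR : ∀ i, R i ∈ Matrix.specialOrthogonalGroup (Fin 3) ℝ)
    (c : Fin F → (Fin K → ℝ))
    (W : Matrix (Fin F × Fin 3) (Fin N) ℝ)
    (hW : ∀ i a j, W (i, a) j = (R i * matReshape N (B.mulVec (c i))) a j) :
    W.rank ≤ 3 * K :=
  low_rank_shape_basis_general F N K B R c W hW
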